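/- arXiv:1502.07699 — 2 statements merged into one kernel-verified Lean document; each statement's English description precedes it below -/
import Mathlib

section
/- Let d ≥ 1 and let p, q, r, s ∈ ℤ^d satisfy the zero-momentum condition p − q + r − s = 0 (so that p, q, r, s are the successive vertices of a parallelogram in ℝ^d). Then the following are equivalent: (i) (|p| = |q| and |r| = |s|) or (|p| = |s| and |q| = |r|); (ii) ⟨p − q, r − q⟩ = 0 (the parallelogram is a rectangle) and (|p| = |q| or |q| = |r|) (the origin lies on the perpendicular bisector hyperplane of one of its sides). -/
/-- The lattice `ℤ^d`. -/
abbrev Zd (d : ℕ) := Fin d → ℤ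

/-- Squared Euclidean norm `|p|² = p₁² + ⋯ + p_d²` of a lattice point, as a real number. -/
noncomputable def znormSq {d : ℕ} (p : Zd d) : ℝ := ∑ i, ((p i : ℝ)) ^ 2

/-- Euclidean norm `|p|` of a lattice point. -/
noncomputable def znorm {d : ℕ} (p : Zd d) : ℝ := Real.sqrt (znormSq p)

/-!
With `s = p - q + r`, expanding `|s|² = |(p - q) + (r - q) + q|²` gives
`|s|² = |p|² - |q|² + |r|² + 2⟨p - q, r - q⟩`. Each side of the equivalence then says that two of
the three quantities `|p|² - |q|²`, `|q|² - |r|²`, `⟨p - q, r - q⟩` vanish, one of the first two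
being among them.
-/

lemma znorm_eq_znorm_iff {d : ℕ} (p q : Zd d) : znorm p = znorm q ↔ znormSq p = znormSq q :=
  Real.sqrt_inj (Finset.sum_nonneg fun _ _ => sq_nonneg _) (Finset.sum_nonneg fun _ _ => sq_nonneg _)

lemma znormSq_eq_of_sub_add_sub_eq_zero {d : ℕ} {p q r s : Zd d} (hmom : p - q + r - s = 0) :
    znormSq s = znormSq p - znormSq q + znormSq r +
      2 * ∑ i, ((p i : ℝ) - (q i : ℝ)) * ((r i : ℝ) - (q i : ℝ)) := by
  have hs : s = p - q + r := (sub_eq_zero.mp hmom).symm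
  simp only [znormSq, Finset.mul_sum, ← Finset.sum_sub_distrib, ← Finset.sum_add_distrib, hs,
    Pi.add_apply, Pi.sub_apply, Int.cast_add, Int.cast_sub]
  exact Finset.sum_congr rfl fun _ _ => by ring

lemma resonance_iff_of_eq_sub_add_add {a b c e t : ℝ} (he : e = a - b + c + 2 * t) :
    ((a = b ∧ c = e) ∨ (a = e ∧ b = c)) ↔ (t = 0 ∧ (a = b ∨ b = c)) := by
  constructor
  · rintro (⟨hab, hce⟩ | ⟨hae, hbc⟩)
    · exact ⟨by linarith, .inl hab⟩
    · exact ⟨by linarith, .inr hbc⟩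
  · rintro ⟨ht, hab | hbc⟩
    · exact .inl ⟨hab, by linarith⟩
    · exact .inr ⟨by linarith, hbc⟩

theorem stmt1_general (d : ℕ) (p q r s : Zd d) (hmom : p - q + r - s = 0) :
    ((znorm p = znorm q ∧ znorm r = znorm s) ∨ (znorm p = znorm s ∧ znorm q = znorm r)) ↔
      ((∑ i, ((p i : ℝ) - (q i : ℝ)) * ((r i : ℝ) - (q i : ℝ)) = 0) ∧
        (znorm p = znorm q ∨ znorm q = znorm r)) := by
  simp only [znorm_eq_znorm_iff]
  exact resonance_iff_of_eq_sub_add_add (znormSq_eq_of_sub_add_sub_eq_zero hmom)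

/-- Geometric characterization of the resonant set `Γ₀` (Lemma 3.1): if `p - q + r - s = 0`,
then `(p,q,r,s) ∈ Γ₀` iff the parallelogram is a rectangle (`⟨p-q, r-q⟩ = 0`) and the origin
lies on the perpendicular bisector hyperplane of one of its sides (`|p| = |q|` or `|q| = |r|`). -/
theorem stmt1 (d : ℕ) (hd : 1 ≤ d) (p q r s : Zd d) (hmom : p - q + r - s = 0) :
    ((znorm p = znorm q ∧ znorm r = znorm s) ∨ (znorm p = znorm s ∧ znorm q = znorm r)) ↔
      ((∑ i, ((p i : ℝ) - (q i : ℝ)) * ((r i : ℝ) - (q i : ℝ)) = 0) ∧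
        (znorm p = znorm q ∨ znorm q = znorm r)) :=
  stmt1_general d p q r s hmom
end

section
/- Let 1 ≤ d ≤ 4 and let a : ℝ → (ℤ^d → ℂ) be a solution of the resonant system, meaning: for every t ∈ ℝ, ‖a(t)‖_{h¹} < ∞ and t ↦ a(t) is continuous from ℝ into h¹, and for every p ∈ ℤ^d and t ∈ ℝ the function t ↦ a_p(t) is differentiable with i · (d/dt) a_p(t) = ∑_{(q,r,s) : (p,q,r,s) ∈ Γ₀} a_q(t) · conj(a_r(t)) · a_s(t) (absolutely convergent series). Then for every natural number N, the quantity A_N(a(t))² := ∑_{p ∈ ℤ^d, |p|² = N} |a_p(t)|² (a finite sum, since {p ∈ ℤ^d : |p|² = N} is finite) is conserved: for all t ∈ ℝ, ∑_{p : |p|² = N} |a_p(t)|² = ∑_{p : |p|² = N} |a_p(0)|². -/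
/-- `(p,q,r,s)` belongs to the resonant set `Γ₀`: zero momentum `p - q + r - s = 0` and
`(|p| = |q| and |r| = |s|)` or `(|p| = |s| and |q| = |r|)`. -/
def res {d : ℕ} (p q r s : Zd d) : Prop :=
  p - q + r - s = 0 ∧
    ((znorm p = znorm q ∧ znorm r = znorm s) ∨ (znorm p = znorm s ∧ znorm q = znorm r))

/-- The set of triples `(q,r,s)` such that `(p,q,r,s) ∈ Γ₀`. -/
abbrev ResTriples (d : ℕ) (p : Zd d) : Type :=
  {x : Zd d × Zd d × Zd d // res p x.1 x.2.1 x.2.2}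

/-- The resonant trilinear operator `R[a¹,a²,a³]_p = ∑_{(p,q,r,s) ∈ Γ₀} a¹_q conj(a²_r) a³_s`. -/
noncomputable def Rop {d : ℕ} (a1 a2 a3 : Zd d → ℂ) (p : Zd d) : ℂ :=
  ∑' x : ResTriples d p, a1 x.1.1 * (starRingEnd ℂ) (a2 x.1.2.1) * a3 x.1.2.2

/-- `a : ℝ → (ℤ^d → ℂ)` is a solution of the resonant system (3.1): at each time it belongs
to `h¹`, it is continuous into `h¹`, and each coordinate is differentiable with
`i ∂ₜ a_p = ∑_{(p,q,r,s) ∈ Γ₀} a_q conj(a_r) a_s`, the series converging absolutely. -/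
def IsSolution (d : ℕ) (a : ℝ → Zd d → ℂ) : Prop :=
  (∀ t : ℝ, Summable (fun p : Zd d => (1 + znormSq p) * ‖a t p‖ ^ 2)) ∧
  (∀ t₀ : ℝ, Filter.Tendsto
      (fun t : ℝ => ∑' p : Zd d, (1 + znormSq p) * ‖a t p - a t₀ p‖ ^ 2)
      (nhds t₀) (nhds 0)) ∧
  (∀ (t : ℝ) (p : Zd d), Summable (fun x : ResTriples d p =>
      ‖a t x.1.1 * (starRingEnd ℂ) (a t x.1.2.1) * a t x.1.2.2‖)) ∧
  (∀ (t : ℝ) (p : Zd d), HasDerivAt (fun τ : ℝ => a τ p)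
      (-Complex.I * Rop (a t) (a t) (a t) p) t)

open ComplexConjugate

lemma znormSq_nonneg {d : ℕ} (p : Zd d) : 0 ≤ znormSq p :=
  Finset.sum_nonneg fun _ _ => sq_nonneg _

lemma znormSq_eq_of_znorm_eq {d : ℕ} {p q : Zd d} (h : znorm p = znorm q) :
    znormSq p = znormSq q :=
  (Real.sqrt_inj (znormSq_nonneg p) (znormSq_nonneg q)).1 h

instance finite_znormSq_eq (d N : ℕ) : Finite {p : Zd d // znormSq p = N} := by
  refine Set.Finite.to_subtype (s := {p | znormSq p = N}) <|
    (Set.Finite.pi' fun _ : Fin d => Set.finite_Icc (-(N : ℤ)) N).subset fun p hp i => ?_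
  have hi : ((p i : ℝ)) ^ 2 ≤ N :=
    hp ▸ Finset.single_le_sum (f := fun j => ((p j : ℝ)) ^ 2) (fun j _ => sq_nonneg _)
      (Finset.mem_univ i)
  replace hi : p i ^ 2 ≤ N := by exact_mod_cast hi
  constructor <;> nlinarith [sq_nonneg (p i + N), sq_nonneg (p i - N)]

lemma res_swap {d : ℕ} {p q r s : Zd d} (h : res p q r s) (hpq : znorm p = znorm q)
    (hrs : znorm r = znorm s) : res q p s r :=
  ⟨by rw [show q - p + s - r = -(p - q + r - s) by abel, h.1, neg_zero],
    Or.inl ⟨hpq.symm, hrs.symm⟩⟩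

lemma res_reverse {d : ℕ} {p q r s : Zd d} (h : res p q r s) (hps : znorm p = znorm s)
    (hqr : znorm q = znorm r) : res s r q p :=
  ⟨by rw [show s - r + q - p = -(p - q + r - s) by abel, h.1, neg_zero],
    Or.inr ⟨hps.symm, hqr.symm⟩⟩

lemma im_tsum_eq_zero_of_involutive {α : Type*} {f : α → ℂ} {σ : α → α}
    (hσ : Function.Involutive σ) (hf : ∀ x, f (σ x) = conj (f x)) : (∑' x, f x).im = 0 := by
  refine Complex.conj_eq_iff_im.1 ?_
  calc conj (∑' x, f x) = ∑' x, conj (f x) := tsum_star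
    _ = ∑' x, f (σ x) := by simp only [hf]
    _ = ∑' x, f x := (hσ.toPerm σ).tsum_eq f

lemma sum_norm_sq_eq_of_hasDerivAt {ι : Type*} [Fintype ι] {f g : ℝ → ι → ℂ}
    (hf : ∀ τ i, HasDerivAt (fun u => f u i) (-Complex.I * g τ i) τ)
    (hg : ∀ τ, (∑ i, conj (f τ i) * g τ i).im = 0) (t s : ℝ) :
    ∑ i, ‖f t i‖ ^ 2 = ∑ i, ‖f s i‖ ^ 2 := by
  have hF : ∀ τ, HasDerivAt (fun u => ∑ i, ‖f u i‖ ^ 2) 0 τ := by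
    intro τ
    refine (HasDerivAt.fun_sum (u := Finset.univ) fun i _ => (hf τ i).norm_sq).congr_deriv ?_
    have hterm : ∀ i, 2 * inner ℝ (f τ i) (-Complex.I * g τ i) =
        2 * (conj (f τ i) * g τ i).im := by
      intro i
      rw [Complex.inner]
      simp only [Complex.mul_re, Complex.mul_im, Complex.neg_re, Complex.neg_im, Complex.I_re,
        Complex.I_im, Complex.conj_re, Complex.conj_im]
      ring
    rw [Finset.sum_congr rfl fun i _ => hterm i, ← Finset.mul_sum, ← Complex.im_sum, hg τ,
      mul_zero]
  exact is_const_of_deriv_eq_zero (fun u => (hF u).differentiableAt) (fun u => (hF u).deriv) t s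

abbrev ResQuad (d N : ℕ) : Type := Σ p : {p : Zd d // znormSq p = N}, ResTriples d p.1

namespace ResQuad

variable {d N : ℕ}

noncomputable def flip : ResQuad d N → ResQuad d N
  | ⟨⟨p, hp⟩, ⟨(q, r, s), h⟩⟩ =>
    if hpqrs : znorm p = znorm q ∧ znorm r = znorm s then
      ⟨⟨q, (znormSq_eq_of_znorm_eq hpqrs.1).symm.trans hp⟩,
        ⟨(p, s, r), res_swap h hpqrs.1 hpqrs.2⟩⟩
    else
      have hpsqr := h.2.resolve_left hpqrs
      ⟨⟨s, (znormSq_eq_of_znorm_eq hpsqr.1).symm.trans hp⟩,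
        ⟨(r, q, p), res_reverse h hpsqr.1 hpsqr.2⟩⟩

lemma flip_mk_of_swap {p q r s : Zd d} (hp : znormSq p = N) (h : res p q r s)
    (hpqrs : znorm p = znorm q ∧ znorm r = znorm s) :
    flip (⟨⟨p, hp⟩, ⟨(q, r, s), h⟩⟩ : ResQuad d N) =
      ⟨⟨q, (znormSq_eq_of_znorm_eq hpqrs.1).symm.trans hp⟩,
        ⟨(p, s, r), res_swap h hpqrs.1 hpqrs.2⟩⟩ :=
  dif_pos hpqrs

lemma flip_mk_of_not_swap {p q r s : Zd d} (hp : znormSq p = N) (h : res p q r s)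
    (hpqrs : ¬(znorm p = znorm q ∧ znorm r = znorm s)) :
    flip (⟨⟨p, hp⟩, ⟨(q, r, s), h⟩⟩ : ResQuad d N) =
      ⟨⟨s, (znormSq_eq_of_znorm_eq (h.2.resolve_left hpqrs).1).symm.trans hp⟩,
        ⟨(r, q, p), res_reverse h (h.2.resolve_left hpqrs).1 (h.2.resolve_left hpqrs).2⟩⟩ :=
  dif_neg hpqrs

lemma flip_involutive : Function.Involutive (flip : ResQuad d N → ResQuad d N) := by
  rintro ⟨⟨p, hp⟩, ⟨⟨q, r, s⟩, h⟩⟩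
  by_cases hpqrs : znorm p = znorm q ∧ znorm r = znorm s
  · rw [flip_mk_of_swap hp h hpqrs, flip_mk_of_swap _ _ ⟨hpqrs.1.symm, hpqrs.2.symm⟩]
  · rw [flip_mk_of_not_swap hp h hpqrs,
      flip_mk_of_not_swap _ _ fun h' => hpqrs ⟨h'.2.symm, h'.1.symm⟩]

noncomputable def summand (b : Zd d → ℂ) (x : ResQuad d N) : ℂ :=
  conj (b x.1) * (b x.2.1.1 * conj (b x.2.1.2.1) * b x.2.1.2.2)

lemma summand_flip (b : Zd d → ℂ) (x : ResQuad d N) :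
    summand b (flip x) = conj (summand b x) := by
  obtain ⟨⟨p, hp⟩, ⟨⟨q, r, s⟩, h⟩⟩ := x
  by_cases hpqrs : znorm p = znorm q ∧ znorm r = znorm s
  · rw [flip_mk_of_swap hp h hpqrs]
    simp only [summand, map_mul, Complex.conj_conj]
    ring
  · rw [flip_mk_of_not_swap hp h hpqrs]
    simp only [summand, map_mul, Complex.conj_conj]
    ring

lemma summable_summand [Finite {p : Zd d // znormSq p = N}] (b : Zd d → ℂ)
    (hb : ∀ p, Summable fun x : ResTriples d p => ‖b x.1.1 * conj (b x.1.2.1) * b x.1.2.2‖) :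
    Summable (summand b : ResQuad d N → ℂ) := by
  refine Summable.of_norm ((summable_sigma_of_nonneg fun _ => norm_nonneg _).2
    ⟨fun p => ((hb p.1).mul_left ‖b p.1‖).congr fun x => ?_, Summable.of_finite⟩)
  simp only [summand, norm_mul, RCLike.norm_conj]

lemma tsum_summand_eq_sum_conj_mul_Rop [Fintype {p : Zd d // znormSq p = N}] (b : Zd d → ℂ)
    (hb : ∀ p, Summable fun x : ResTriples d p => ‖b x.1.1 * conj (b x.1.2.1) * b x.1.2.2‖) :
    ∑' x : ResQuad d N, summand b x =
      ∑ p : {p : Zd d // znormSq p = N}, conj (b p) * Rop b b b p := by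
  rw [(summable_summand b hb).tsum_sigma, tsum_fintype]
  exact Finset.sum_congr rfl fun p _ => by rw [Rop, ← tsum_mul_left]; rfl

end ResQuad

lemma im_sum_conj_mul_Rop_eq_zero {d N : ℕ} [Fintype {p : Zd d // znormSq p = N}]
    (b : Zd d → ℂ)
    (hb : ∀ p, Summable fun x : ResTriples d p => ‖b x.1.1 * conj (b x.1.2.1) * b x.1.2.2‖) :
    (∑ p : {p : Zd d // znormSq p = N}, conj (b p) * Rop b b b p).im = 0 := by
  rw [← ResQuad.tsum_summand_eq_sum_conj_mul_Rop b hb]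
  exact im_tsum_eq_zero_of_involutive ResQuad.flip_involutive (ResQuad.summand_flip b)

theorem stmt8_general (d : ℕ) (a : ℝ → Zd d → ℂ)
    (ha : IsSolution d a) (N : ℕ) (t : ℝ) :
    ∑' p : {p : Zd d // znormSq p = (N : ℝ)}, ‖a t p.1‖ ^ 2 =
      ∑' p : {p : Zd d // znormSq p = (N : ℝ)}, ‖a 0 p.1‖ ^ 2 := by
  obtain ⟨-, -, hsum, hode⟩ := ha
  have := Fintype.ofFinite {p : Zd d // znormSq p = N}
  rw [tsum_fintype, tsum_fintype]
  exact sum_norm_sq_eq_of_hasDerivAt (fun τ (p : {p : Zd d // znormSq p = N}) => hode τ p.1)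
    (fun τ => im_sum_conj_mul_Rop_eq_zero (a τ) (hsum τ)) t 0

/-- Conservation of the quantities `A_N(a)² = ∑_{|p|² = N} |a_p|²` along the resonant flow
(proof of Lemma 3.3). -/
theorem stmt8 (d : ℕ) (hd1 : 1 ≤ d) (hd4 : d ≤ 4) (a : ℝ → Zd d → ℂ)
    (ha : IsSolution d a) (N : ℕ) (t : ℝ) :
    ∑' p : {p : Zd d // znormSq p = (N : ℝ)}, ‖a t p.1‖ ^ 2 =
      ∑' p : {p : Zd d // znormSq p = (N : ℝ)}, ‖a 0 p.1‖ ^ 2 :=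
  stmt8_general d a ha N t
end
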